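/- Let (P_n) be strongly invariant for the system (A) and let h, k be growth rates. The pair (A,P) is (h,k)-dichotomic if and only if there exist a sequence of norms 𝒩 = {|||·|||_n : n ∈ ℕ} compatible with (P_n) and a nondecreasing sequence s : ℕ → [1,∞) such that h_m|||A_m^n P_n x|||_m ≤ s_n h_n|||x|||_n and k_m|||B_m^n Q_m x|||_n ≤ s_m k_n|||x|||_m for all m ≥ n and all x ∈ X. -/

import Mathlib

/-! For the forward direction take `|||x|||_n = ‖P_n x‖ + ‖Q_n x‖`: it agrees with `‖·‖` on
`Im P_n` and on `Ker P_n`, `A_m^n` maps `Im P_n` into `Im P_m`, and `B_m^n` inverts `A_m^n` from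
`Ker P_m` to `Ker P_n`, so the dichotomy estimates are the required ones with `s = d`. Conversely,
compatibility squeezes `|||·|||_n` between `‖·‖` and `c_n ‖·‖` on `Im P_n` and `Ker P_n`, so the
estimates transfer back with `d = s c`. -/

open ContinuousLinearMap Filter

noncomputable section

variable {X : Type*} [NormedAddCommGroup X] [NormedSpace ℝ X]

/-- The evolution operator `A_m^n` associated to the linear difference system
`x_{n+1} = A_n x_n`: `A_m^n = A_{m-1} ⋯ A_n` for `m > n` and `A_n^n = I`. -/
def evol (A : ℕ → X →L[ℝ] X) : ℕ → ℕ → X →L[ℝ] X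
  | 0, _ => 1
  | m + 1, n => if m + 1 ≤ n then 1 else A m ∘L evol A m n

/-- `P` is a projectors sequence. -/
def ProjSeq (P : ℕ → X →L[ℝ] X) : Prop := ∀ n, P n ∘L P n = P n

/-- The projectors sequence `P` is invariant for the system `(A)`. -/
def InvariantFor (A P : ℕ → X →L[ℝ] X) : Prop := ∀ n, A n ∘L P n = P (n + 1) ∘L A n

/-- The projectors sequence `P` is strongly invariant for the system `(A)`: it is invariant and
the restriction of `A_m^n` to `Ker P_n` is an isomorphism from `Ker P_n` onto `Ker P_m`. -/
def StronglyInvariantFor (A P : ℕ → X →L[ℝ] X) : Prop :=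
  InvariantFor A P ∧ ∀ m n : ℕ, n ≤ m →
    Set.BijOn (evol A m n) (LinearMap.ker (P n : X →ₗ[ℝ] X) : Set X)
      (LinearMap.ker (P m : X →ₗ[ℝ] X) : Set X)

/-- A growth rate: an increasing sequence with values in `[1, ∞)` tending to `∞`. -/
def IsGrowthRate (h : ℕ → ℝ) : Prop :=
  StrictMono h ∧ (∀ n, 1 ≤ h n) ∧ Tendsto h atTop atTop

/-- The pair `(A, P)` is `(h,k)`-dichotomic. -/
def Dichotomic (A P : ℕ → X →L[ℝ] X) (h k : ℕ → ℝ) : Prop :=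
  ∃ d : ℕ → ℝ, (∀ n, 1 ≤ d n) ∧ Monotone d ∧
    ∀ m n : ℕ, n ≤ m → ∀ x : X,
      h m * ‖evol A m n (P n x)‖ ≤ d n * (h n * ‖P n x‖) ∧
      k m * ‖(1 - P n) x‖ ≤ d m * (k n * ‖evol A m n ((1 - P n) x)‖)

/-- The pair `(A, P)` is uniformly `(h,k)`-dichotomic. -/
def UniformDichotomic (A P : ℕ → X →L[ℝ] X) (h k : ℕ → ℝ) : Prop :=
  ∃ d : ℝ, 1 ≤ d ∧
    ∀ m n : ℕ, n ≤ m → ∀ x : X,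
      h m * ‖evol A m n (P n x)‖ ≤ d * (h n * ‖P n x‖) ∧
      k m * ‖(1 - P n) x‖ ≤ d * (k n * ‖evol A m n ((1 - P n) x)‖)

/-- The pair `(A, P)` has `(h,k)`-growth. -/
def HasGrowth (A P : ℕ → X →L[ℝ] X) (h k : ℕ → ℝ) : Prop :=
  ∃ g : ℕ → ℝ, (∀ n, 1 ≤ g n) ∧ Monotone g ∧
    ∀ m n : ℕ, n ≤ m → ∀ x : X,
      h n * ‖evol A m n (P n x)‖ ≤ g n * (h m * ‖P n x‖) ∧
      k n * ‖(1 - P n) x‖ ≤ g m * (k m * ‖evol A m n ((1 - P n) x)‖)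

/-- `N` is a sequence of norms on `X`. -/
def IsNormSeq (N : ℕ → X → ℝ) : Prop :=
  ∀ n, (∀ x y, N n (x + y) ≤ N n x + N n y) ∧
    (∀ (a : ℝ) (x : X), N n (a • x) = |a| * N n x) ∧
    (∀ x, N n x = 0 ↔ x = 0)

/-- The sequence of norms `N` is compatible with the projectors sequence `P`. -/
def NormsCompatible (N : ℕ → X → ℝ) (P : ℕ → X →L[ℝ] X) : Prop :=
  IsNormSeq N ∧ ∃ c : ℕ → ℝ, (∀ n, 1 ≤ c n) ∧ Monotone c ∧
    ∀ (n : ℕ) (x : X), ‖x‖ ≤ N n x ∧ N n x ≤ c n * (‖P n x‖ + ‖(1 - P n) x‖)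

/-- The defining properties of the skew-evolution operator `B` associated to the pair `(A, P)`:
`A_m^n B_m^n Q_m = Q_m`, `B_m^n A_m^n Q_n = Q_n` and `B_m^n Q_m = Q_n B_m^n Q_m` for `m ≥ n`,
where `Q_n = I - P_n`. -/
def SkewEvol (A P : ℕ → X →L[ℝ] X) (B : ℕ → ℕ → X →L[ℝ] X) : Prop :=
  ∀ m n : ℕ, n ≤ m →
    evol A m n ∘L (B m n ∘L (1 - P m)) = 1 - P m ∧
    B m n ∘L (evol A m n ∘L (1 - P n)) = 1 - P n ∧
    B m n ∘L (1 - P m) = (1 - P n) ∘L (B m n ∘L (1 - P m))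

lemma evol_self (A : ℕ → X →L[ℝ] X) (n : ℕ) : evol A n n = 1 := by
  cases n with
  | zero => rfl
  | succ m => exact if_pos le_rfl

lemma evol_succ (A : ℕ → X →L[ℝ] X) {m n : ℕ} (hmn : n ≤ m) :
    evol A (m + 1) n = A m ∘L evol A m n :=
  if_neg (by omega)

section Projections

variable {A P : ℕ → X →L[ℝ] X} {m n : ℕ}

lemma norm_add_norm_one_sub_apply_of_apply_eq_zero {T : X →L[ℝ] X} {x : X} (hx : T x = 0) :
    ‖T x‖ + ‖(1 - T) x‖ = ‖x‖ := by
  simp [hx]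

lemma norm_add_norm_one_sub_apply_of_apply_eq_self {T : X →L[ℝ] X} {x : X} (hx : T x = x) :
    ‖T x‖ + ‖(1 - T) x‖ = ‖x‖ := by
  simp [hx]

lemma ProjSeq.apply_apply (hP : ProjSeq P) (n : ℕ) (x : X) : P n (P n x) = P n x :=
  DFunLike.congr_fun (hP n) x

lemma ProjSeq.apply_one_sub_apply (hP : ProjSeq P) (n : ℕ) (x : X) : P n ((1 - P n) x) = 0 := by
  simp [hP.apply_apply]

lemma InvariantFor.evol_comp (hInv : InvariantFor A P) (hmn : n ≤ m) :
    evol A m n ∘L P n = P m ∘L evol A m n := by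
  induction m, hmn using Nat.le_induction with
  | base => rw [evol_self]; exact (one_mul (P n)).trans (mul_one (P n)).symm
  | succ m hm ih =>
    rw [evol_succ A hm, comp_assoc, ih, ← comp_assoc, hInv m, comp_assoc]

lemma InvariantFor.evol_apply (hInv : InvariantFor A P) (hmn : n ≤ m) (x : X) :
    evol A m n (P n x) = P m (evol A m n x) :=
  DFunLike.congr_fun (hInv.evol_comp hmn) x

lemma InvariantFor.apply_evol_apply (hP : ProjSeq P) (hInv : InvariantFor A P) (hmn : n ≤ m)
    (x : X) : P m (evol A m n (P n x)) = evol A m n (P n x) := by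
  rw [← hInv.evol_apply hmn, hP.apply_apply]

lemma InvariantFor.apply_evol_one_sub_apply (hP : ProjSeq P) (hInv : InvariantFor A P)
    (hmn : n ≤ m) (x : X) : P m (evol A m n ((1 - P n) x)) = 0 := by
  rw [← hInv.evol_apply hmn, hP.apply_one_sub_apply, map_zero]

end Projections

section SkewEvolution

variable {A P : ℕ → X →L[ℝ] X} {B : ℕ → ℕ → X →L[ℝ] X} {m n : ℕ}

lemma SkewEvol.evol_apply (hB : SkewEvol A P B) (hmn : n ≤ m) (x : X) :
    evol A m n (B m n ((1 - P m) x)) = (1 - P m) x :=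
  DFunLike.congr_fun (hB m n hmn).1 x

lemma SkewEvol.apply_evol (hB : SkewEvol A P B) (hmn : n ≤ m) (x : X) :
    B m n (evol A m n ((1 - P n) x)) = (1 - P n) x :=
  DFunLike.congr_fun (hB m n hmn).2.1 x

lemma SkewEvol.apply_apply_eq_zero (hB : SkewEvol A P B) (hmn : n ≤ m) (x : X) :
    P n (B m n ((1 - P m) x)) = 0 := by
  have h := DFunLike.congr_fun (hB m n hmn).2.2 x
  simp only [comp_apply, sub_apply, one_apply_eq_self] at h
  exact sub_eq_self.mp h.symm

end SkewEvolution

def projNorm (P : ℕ → X →L[ℝ] X) (n : ℕ) (x : X) : ℝ := ‖P n x‖ + ‖(1 - P n) x‖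

lemma norm_le_projNorm (P : ℕ → X →L[ℝ] X) (n : ℕ) (x : X) : ‖x‖ ≤ projNorm P n x := by
  calc ‖x‖ = ‖P n x + (1 - P n) x‖ := by simp
    _ ≤ projNorm P n x := norm_add_le _ _

lemma isNormSeq_projNorm (P : ℕ → X →L[ℝ] X) : IsNormSeq (projNorm P) := by
  refine fun n => ⟨fun x y => ?_, fun a x => ?_, fun x => ⟨fun hx => ?_, ?_⟩⟩
  · unfold projNorm
    simp only [map_add]
    linarith [norm_add_le (P n x) (P n y), norm_add_le ((1 - P n) x) ((1 - P n) y)]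
  · simp only [projNorm, map_smul, norm_smul, Real.norm_eq_abs]
    ring
  · exact norm_le_zero_iff.mp (hx ▸ norm_le_projNorm P n x)
  · rintro rfl
    simp [projNorm]

lemma normsCompatible_projNorm (P : ℕ → X →L[ℝ] X) : NormsCompatible (projNorm P) P :=
  ⟨isNormSeq_projNorm P, fun _ => 1, fun _ => le_rfl, monotone_const,
    fun n x => ⟨norm_le_projNorm P n x, (one_mul _).ge⟩⟩

variable {A P : ℕ → X →L[ℝ] X} {B : ℕ → ℕ → X →L[ℝ] X} {h k : ℕ → ℝ}

theorem Dichotomic.exists_normsCompatible (hP : ProjSeq P) (hInv : InvariantFor A P)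
    (hB : SkewEvol A P B) (hh : ∀ n, 0 ≤ h n) (hk : ∀ n, 0 ≤ k n) (hD : Dichotomic A P h k) :
    ∃ N : ℕ → X → ℝ, NormsCompatible N P ∧
      ∃ s : ℕ → ℝ, (∀ n, 1 ≤ s n) ∧ Monotone s ∧
        ∀ m n : ℕ, n ≤ m → ∀ x : X,
          h m * N m (evol A m n (P n x)) ≤ s n * (h n * N n x) ∧
          k m * N n (B m n ((1 - P m) x)) ≤ s m * (k n * N m x) := by
  obtain ⟨d, hd1, hd, hdich⟩ := hD
  refine ⟨projNorm P, normsCompatible_projNorm P, d, hd1, hd, fun m n hmn x => ⟨?_, ?_⟩⟩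
  · have hdn : 0 ≤ d n := zero_le_one.trans (hd1 n)
    rw [projNorm, norm_add_norm_one_sub_apply_of_apply_eq_self (hInv.apply_evol_apply hP hmn x)]
    calc h m * ‖evol A m n (P n x)‖ ≤ d n * (h n * ‖P n x‖) := (hdich m n hmn x).1
      _ ≤ d n * (h n * projNorm P n x) := by
        gcongr
        · exact hh n
        · exact le_add_of_nonneg_right (norm_nonneg _)
  · set y := B m n ((1 - P m) x)
    have hdm : 0 ≤ d m := zero_le_one.trans (hd1 m)
    have hPy : P n y = 0 := hB.apply_apply_eq_zero hmn x
    have hQy : (1 - P n) y = y := by simp [hPy]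
    rw [projNorm, norm_add_norm_one_sub_apply_of_apply_eq_zero hPy]
    calc k m * ‖y‖ = k m * ‖(1 - P n) y‖ := by rw [hQy]
      _ ≤ d m * (k n * ‖evol A m n ((1 - P n) y)‖) := (hdich m n hmn y).2
      _ = d m * (k n * ‖(1 - P m) x‖) := by rw [hQy, hB.evol_apply hmn]
      _ ≤ d m * (k n * projNorm P m x) := by
        gcongr
        · exact hk n
        · exact le_add_of_nonneg_left (norm_nonneg _)

theorem dichotomic_of_normsCompatible (hP : ProjSeq P) (hInv : InvariantFor A P)
    (hB : SkewEvol A P B) (hh : ∀ n, 0 ≤ h n) (hk : ∀ n, 0 ≤ k n) {N : ℕ → X → ℝ}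
    (hN : NormsCompatible N P) {s : ℕ → ℝ} (hs1 : ∀ n, 1 ≤ s n) (hs : Monotone s)
    (hbound : ∀ m n : ℕ, n ≤ m → ∀ x : X,
      h m * N m (evol A m n (P n x)) ≤ s n * (h n * N n x) ∧
      k m * N n (B m n ((1 - P m) x)) ≤ s m * (k n * N m x)) :
    Dichotomic A P h k := by
  obtain ⟨-, c, hc1, hc, hNc⟩ := hN
  have hs0 : ∀ n, 0 ≤ s n := fun n => zero_le_one.trans (hs1 n)
  have hc0 : ∀ n, 0 ≤ c n := fun n => zero_le_one.trans (hc1 n)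
  have hN_le {n : ℕ} {x : X} (hx : P n x = 0 ∨ P n x = x) : N n x ≤ c n * ‖x‖ := by
    rcases hx with hx | hx
    · simpa only [norm_add_norm_one_sub_apply_of_apply_eq_zero hx] using (hNc n x).2
    · simpa only [norm_add_norm_one_sub_apply_of_apply_eq_self hx] using (hNc n x).2
  refine ⟨s * c, fun n => one_le_mul_of_one_le_of_one_le (hs1 n) (hc1 n), hs.mul hc hs0 hc0,
    fun m n hmn x => ⟨?_, ?_⟩⟩
  · calc h m * ‖evol A m n (P n x)‖ ≤ h m * N m (evol A m n (P n x)) := by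
          gcongr
          · exact hh m
          · exact (hNc m _).1
      _ ≤ s n * (h n * N n (P n x)) := by simpa [hP.apply_apply] using (hbound m n hmn (P n x)).1
      _ ≤ s n * (h n * (c n * ‖P n x‖)) := by
          gcongr
          · exact hs0 n
          · exact hh n
          · exact hN_le (Or.inr (hP.apply_apply n x))
      _ = (s * c) n * (h n * ‖P n x‖) := by simp only [Pi.mul_apply]; ring
  · set z := evol A m n ((1 - P n) x)
    have hPz : P m z = 0 := hInv.apply_evol_one_sub_apply hP hmn x
    have hQz : (1 - P m) z = z := by simp [hPz]
    calc k m * ‖(1 - P n) x‖ ≤ k m * N n ((1 - P n) x) := by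
          gcongr
          · exact hk m
          · exact (hNc n _).1
      _ = k m * N n (B m n ((1 - P m) z)) := by rw [hQz, hB.apply_evol hmn]
      _ ≤ s m * (k n * N m z) := (hbound m n hmn z).2
      _ ≤ s m * (k n * (c m * ‖z‖)) := by
          gcongr
          · exact hs0 m
          · exact hk n
          · exact hN_le (Or.inl hPz)
      _ = (s * c) m * (k n * ‖z‖) := by simp only [Pi.mul_apply]; ring

theorem stmt_13_general (A P : ℕ → X →L[ℝ] X) (B : ℕ → ℕ → X →L[ℝ] X)
    (hP : ProjSeq P) (hSI : StronglyInvariantFor A P) (hB : SkewEvol A P B)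
    (h k : ℕ → ℝ) (hh : IsGrowthRate h) (hk : IsGrowthRate k) :
    Dichotomic A P h k ↔
      ∃ N : ℕ → X → ℝ, NormsCompatible N P ∧
        ∃ s : ℕ → ℝ, (∀ n, 1 ≤ s n) ∧ Monotone s ∧
          ∀ m n : ℕ, n ≤ m → ∀ x : X,
            h m * N m (evol A m n (P n x)) ≤ s n * (h n * N n x) ∧
            k m * N n (B m n ((1 - P m) x)) ≤ s m * (k n * N m x) := by
  have hh0 : ∀ n, 0 ≤ h n := fun n => zero_le_one.trans (hh.2.1 n)
  have hk0 : ∀ n, 0 ≤ k n := fun n => zero_le_one.trans (hk.2.1 n)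
  refine ⟨Dichotomic.exists_normsCompatible hP hSI.1 hB hh0 hk0, ?_⟩
  rintro ⟨N, hN, s, hs1, hs, hbound⟩
  exact dichotomic_of_normsCompatible hP hSI.1 hB hh0 hk0 hN hs1 hs hbound

theorem stmt_13 [CompleteSpace X] (A P : ℕ → X →L[ℝ] X) (B : ℕ → ℕ → X →L[ℝ] X)
    (hP : ProjSeq P) (hSI : StronglyInvariantFor A P) (hB : SkewEvol A P B)
    (h k : ℕ → ℝ) (hh : IsGrowthRate h) (hk : IsGrowthRate k) :
    Dichotomic A P h k ↔
      ∃ N : ℕ → X → ℝ, NormsCompatible N P ∧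
        ∃ s : ℕ → ℝ, (∀ n, 1 ≤ s n) ∧ Monotone s ∧
          ∀ m n : ℕ, n ≤ m → ∀ x : X,
            h m * N m (evol A m n (P n x)) ≤ s n * (h n * N n x) ∧
            k m * N n (B m n ((1 - P m) x)) ≤ s m * (k n * N m x) :=
  stmt_13_general A P B hP hSI hB h k hh hk

end
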